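/- Let G be a group, k a positive natural number, s : Fin k → G, and let π : G →* H be a surjective group homomorphism. Let H_G(n) and H_H(n) be the Shannon entropies of the n-step random walk distributions on (G, s) and on (H, π ∘ s) respectively. Then limsup_{n → ∞} H_H(n)/n ≤ limsup_{n → ∞} H_G(n)/n: the asymptotic entropy of a quotient marked group is at most the asymptotic entropy of the group (property (∗) of Proposition 1.9 for the asymptotic entropy). -/

import Mathlib

/-!
Both walks are images of the uniform distribution on words of length `n`: the walk on `G` is the
law of the word product, the walk on `H` the law of its image under `π`. For the law `p` of `f w`
with `w` uniform, the entropy is the mean of `-log p (f w)` over `w`. Composing `f` with a further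
map `g` can only enlarge the fibre through `w`, so `p` grows pointwise along `w` and the entropy
drops. The same formula gives `0 ≤ H(n) ≤ log (k ^ n)`, so the sequences `H(n) / n` are bounded
and their limsups compare.
-/

open Filter

/-- The `n`-step distribution of the simple random walk on the marked group `(G, s)`. -/
noncomputable def rwDist {G : Type*} [Group G] {k : ℕ} (s : Fin k → G) (n : ℕ) (g : G) : ℝ :=
  (Nat.card {w : Fin n → Fin k | (List.ofFn (fun i => s (w i))).prod = g} : ℝ) / k ^ n

/-- The Shannon entropy of the `n`-step distribution of the simple random walk
on the marked group `(G, s)`. -/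
noncomputable def rwEntropy {G : Type*} [Group G] {k : ℕ} (s : Fin k → G) (n : ℕ) : ℝ :=
  ∑' g : G, Real.negMulLog (rwDist s n g)

open Finset

section UniformPushforward

open Real

variable {W β γ : Type*} [Fintype W]

noncomputable def uniformPushforward (f : W → β) (b : β) : ℝ :=
  Nat.card {w // f w = b} / Fintype.card W

noncomputable def uniformPushforwardEntropy (f : W → β) : ℝ :=
  ∑' b, negMulLog (uniformPushforward f b)

lemma uniformPushforward_le_uniformPushforward_comp (f : W → β) (g : β → γ) (w : W) :
    uniformPushforward f (f w) ≤ uniformPushforward (g ∘ f) (g (f w)) := by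
  unfold uniformPushforward
  gcongr
  exact Finite.card_le_of_embedding (Subtype.impEmbedding _ _ fun v hv => by simp [hv])

lemma card_mul_uniformPushforward (f : W → β) (b : β) :
    Fintype.card W * uniformPushforward f b = Nat.card {w // f w = b} := by
  rcases isEmpty_or_nonempty W with _ | _
  · simp
  · unfold uniformPushforward
    field_simp

lemma one_le_card_mul_uniformPushforward (f : W → β) (w : W) :
    1 ≤ Fintype.card W * uniformPushforward f (f w) := by
  have : Nonempty {v // f v = f w} := ⟨⟨w, rfl⟩⟩
  rw [card_mul_uniformPushforward]
  exact_mod_cast Nat.card_pos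

lemma uniformPushforward_pos (f : W → β) (w : W) : 0 < uniformPushforward f (f w) :=
  pos_of_mul_pos_right (one_pos.trans_le (one_le_card_mul_uniformPushforward f w)) (by positivity)

lemma uniformPushforward_le_one (f : W → β) (b : β) : uniformPushforward f b ≤ 1 := by
  unfold uniformPushforward
  refine div_le_one_of_le₀ ?_ (by positivity)
  rw [← Nat.card_eq_fintype_card]
  exact_mod_cast Finite.card_subtype_le _

lemma uniformPushforwardEntropy_eq_sum (f : W → β) :
    uniformPushforwardEntropy f =
      (∑ w, -log (uniformPushforward f (f w))) / Fintype.card W := by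
  classical
  have hfiber (b : β) : negMulLog (uniformPushforward f b) =
      ∑ w with f w = b, -log (uniformPushforward f (f w)) / Fintype.card W := by
    have hcard : (#{w | f w = b} : ℝ) / Fintype.card W = uniformPushforward f b := by
      rw [uniformPushforward, Nat.card_eq_fintype_card, Fintype.card_subtype]
    rw [sum_congr rfl fun w hw => by rw [(mem_filter.1 hw).2], sum_const, nsmul_eq_mul,
      negMulLog, ← hcard]
    ring
  rw [uniformPushforwardEntropy, tsum_eq_sum (s := univ.image f), sum_div]
  · simp_rw [hfiber]
    exact sum_fiberwise_of_maps_to (fun w _ => mem_image_of_mem f (mem_univ w)) _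
  · intro b hb
    have : IsEmpty {w // f w = b} := ⟨fun ⟨w, hw⟩ => hb (hw ▸ mem_image_of_mem f (mem_univ w))⟩
    simp [uniformPushforward]

lemma uniformPushforwardEntropy_comp_le (f : W → β) (g : β → γ) :
    uniformPushforwardEntropy (g ∘ f) ≤ uniformPushforwardEntropy f := by
  rw [uniformPushforwardEntropy_eq_sum, uniformPushforwardEntropy_eq_sum]
  gcongr with w
  exacts [uniformPushforward_pos f w, uniformPushforward_le_uniformPushforward_comp f g w]

lemma uniformPushforwardEntropy_nonneg (f : W → β) : 0 ≤ uniformPushforwardEntropy f := by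
  rw [uniformPushforwardEntropy_eq_sum]
  refine div_nonneg (sum_nonneg fun w _ => neg_nonneg.2 ?_) (Nat.cast_nonneg _)
  exact log_nonpos (uniformPushforward_pos f w).le (uniformPushforward_le_one f _)

lemma uniformPushforwardEntropy_le_log_card (f : W → β) :
    uniformPushforwardEntropy f ≤ log (Fintype.card W) := by
  rw [uniformPushforwardEntropy_eq_sum]
  refine div_le_of_le_mul₀ (by positivity) (log_natCast_nonneg _) ?_
  calc ∑ w, -log (uniformPushforward f (f w))
      ≤ ∑ _w : W, log (Fintype.card W) := by
        gcongr with w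
        have : Nonempty W := ⟨w⟩
        have hlog := log_nonneg (one_le_card_mul_uniformPushforward f w)
        rw [log_mul (Nat.cast_ne_zero.2 Fintype.card_ne_zero)
          (uniformPushforward_pos f w).ne'] at hlog
        linarith
    _ = log (Fintype.card W) * Fintype.card W := by simp [mul_comm]

end UniformPushforward

def wordProd {M : Type*} [Monoid M] {k : ℕ} (s : Fin k → M) (n : ℕ) (w : Fin n → Fin k) : M :=
  (List.ofFn fun i => s (w i)).prod

lemma wordProd_comp {M N : Type*} [Monoid M] [Monoid N] {k : ℕ} (π : M →* N) (s : Fin k → M)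
    (n : ℕ) : wordProd (π ∘ s) n = π ∘ wordProd s n := by
  ext w
  simp [wordProd, map_list_prod, List.map_ofFn, Function.comp_def]

section RandomWalk

variable {G H : Type*} [Group G] [Group H] {k : ℕ}

lemma rwDist_eq_uniformPushforward (s : Fin k → G) (n : ℕ) :
    rwDist s n = uniformPushforward (wordProd s n) := by
  ext g
  simp only [rwDist, uniformPushforward, wordProd, Fintype.card_fun, Fintype.card_fin,
    Nat.cast_pow]
  rfl

lemma rwEntropy_eq_uniformPushforwardEntropy (s : Fin k → G) (n : ℕ) :
    rwEntropy s n = uniformPushforwardEntropy (wordProd s n) := by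
  rw [rwEntropy, rwDist_eq_uniformPushforward, uniformPushforwardEntropy]

lemma rwEntropy_comp_le (π : G →* H) (s : Fin k → G) (n : ℕ) :
    rwEntropy (π ∘ s) n ≤ rwEntropy s n := by
  simp only [rwEntropy_eq_uniformPushforwardEntropy, wordProd_comp]
  exact uniformPushforwardEntropy_comp_le _ _

lemma rwEntropy_nonneg (s : Fin k → G) (n : ℕ) : 0 ≤ rwEntropy s n := by
  rw [rwEntropy_eq_uniformPushforwardEntropy]
  exact uniformPushforwardEntropy_nonneg _

lemma rwEntropy_div_le_log (s : Fin k → G) (n : ℕ) : rwEntropy s n / n ≤ Real.log k := by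
  refine div_le_of_le_mul₀ n.cast_nonneg (Real.log_natCast_nonneg k) ?_
  calc rwEntropy s n ≤ Real.log (Fintype.card (Fin n → Fin k)) := by
        rw [rwEntropy_eq_uniformPushforwardEntropy]
        exact uniformPushforwardEntropy_le_log_card _
    _ = Real.log k * n := by simp [Real.log_pow, mul_comm]

end RandomWalk

theorem asymptotic_entropy_quotient_le_general {G H : Type*} [Group G] [Group H] (k : ℕ)
    (s : Fin k → G) (π : G →* H) :
    (Filter.atTop.limsup fun n : ℕ => rwEntropy (⇑π ∘ s) n / n) ≤
      Filter.atTop.limsup fun n : ℕ => rwEntropy s n / n := by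
  refine limsup_le_limsup (.of_forall fun n => ?_) ?_ ?_
  · exact div_le_div_of_nonneg_right (rwEntropy_comp_le π s n) n.cast_nonneg
  · exact isCoboundedUnder_le_of_le atTop fun n => div_nonneg (rwEntropy_nonneg _ n) n.cast_nonneg
  · exact isBoundedUnder_of ⟨Real.log k, rwEntropy_div_le_log s⟩

/-- The asymptotic entropy of a quotient marked group is at most the asymptotic entropy
of the group. -/
theorem asymptotic_entropy_quotient_le {G H : Type*} [Group G] [Group H] (k : ℕ) (hk : 0 < k)
    (s : Fin k → G) (π : G →* H) (hπ : Function.Surjective π) :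
    (Filter.atTop.limsup fun n : ℕ => rwEntropy (⇑π ∘ s) n / n) ≤
      Filter.atTop.limsup fun n : ℕ => rwEntropy s n / n :=
  asymptotic_entropy_quotient_le_general k s π
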